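/- arXiv:2008.13618 — 2 statements merged into one kernel-verified Lean document; each statement's English description precedes it below -/
import Mathlib

section
/- Let r ≥ 2, let n_1, ..., n_r be non-negative integers with sum n ≥ 1, and let α' > 0. Then log(Γ(α')/Γ(n + α')) + Σ_{k=1}^{r} log(Γ(n_k + α'/r)/Γ(α'/r)) ≤ -log r. -/
/-!
Since `Γ(n + x) / Γ(x)` is the rising factorial `x⁽ⁿ⁾ = x (x + 1) ⋯ (x + n - 1)`, the claim says
`r ∏ₖ α⁽ᵐᵏ⁾ ≤ (r α)⁽ᴺ⁾` for `α = α' / r` and `N = ∑ₖ mₖ ≥ 1`. Rising factorials are superadditive,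
`x⁽ᵃ⁾ y⁽ᵇ⁾ ≤ (x + y)⁽ᵃ⁺ᵇ⁾` for `x, y ≥ 0`. Write one nonempty block as `α⁽ᵐ⁾ = α (α + 1)⁽ᵐ⁻¹⁾`
and merge everything else into `(r α + 1)⁽ᴺ⁻¹⁾`; then `r α (r α + 1)⁽ᴺ⁻¹⁾ = (r α)⁽ᴺ⁾`.
-/

open Polynomial Finset

section Pochhammer

variable {S : Type*} [CommSemiring S]

theorem ascPochhammer_eval_succ_left (n : ℕ) (x : S) :
    (ascPochhammer S (n + 1)).eval x = x * (ascPochhammer S n).eval (x + 1) := by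
  simp [ascPochhammer_succ_left]

variable [PartialOrder S] [IsOrderedRing S]

theorem ascPochhammer_eval_nonneg (n : ℕ) {x : S} (hx : 0 ≤ x) :
    0 ≤ (ascPochhammer S n).eval x := by
  induction n with
  | zero => simp
  | succ n ih => rw [ascPochhammer_succ_eval]; positivity

theorem ascPochhammer_eval_le_eval (n : ℕ) {x y : S} (hx : 0 ≤ x) (hxy : x ≤ y) :
    (ascPochhammer S n).eval x ≤ (ascPochhammer S n).eval y := by
  induction n with
  | zero => simp
  | succ n ih =>
    simp only [ascPochhammer_succ_eval]
    exact mul_le_mul ih (by gcongr) (by positivity) (ascPochhammer_eval_nonneg n (hx.trans hxy))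

theorem ascPochhammer_eval_mul_le_eval_add (a b : ℕ) {x y : S} (hx : 0 ≤ x) (hy : 0 ≤ y) :
    (ascPochhammer S a).eval x * (ascPochhammer S b).eval y ≤
      (ascPochhammer S (a + b)).eval (x + y) := by
  induction b with
  | zero => simpa using ascPochhammer_eval_le_eval a hx (le_add_of_nonneg_right hy)
  | succ b ih =>
    rw [ascPochhammer_succ_eval, ← add_assoc, ascPochhammer_succ_eval, ← mul_assoc]
    refine mul_le_mul ih ?_ (by positivity) (ascPochhammer_eval_nonneg _ (by positivity))
    push_cast
    calc y + b ≤ (x + a) + (y + b) := le_add_of_nonneg_left (by positivity)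
      _ = x + y + (a + b) := by ring

theorem prod_ascPochhammer_eval_le_eval_sum {ι : Type*} (s : Finset ι) (m : ι → ℕ) {x : ι → S}
    (hx : ∀ i ∈ s, 0 ≤ x i) :
    ∏ i ∈ s, (ascPochhammer S (m i)).eval (x i) ≤
      (ascPochhammer S (∑ i ∈ s, m i)).eval (∑ i ∈ s, x i) := by
  classical
  induction s using Finset.induction_on with
  | empty => simp
  | insert a s ha ih =>
    have hxa : 0 ≤ x a := hx a (mem_insert_self a s)
    have hxs : ∀ i ∈ s, 0 ≤ x i := fun i hi => hx i (mem_insert_of_mem hi)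
    rw [prod_insert ha, sum_insert ha, sum_insert ha]
    calc _ ≤ (ascPochhammer S (m a)).eval (x a) *
            (ascPochhammer S (∑ i ∈ s, m i)).eval (∑ i ∈ s, x i) :=
          mul_le_mul_of_nonneg_left (ih hxs) (ascPochhammer_eval_nonneg _ hxa)
      _ ≤ _ := ascPochhammer_eval_mul_le_eval_add _ _ hxa (sum_nonneg hxs)

theorem card_mul_prod_ascPochhammer_eval_le {ι : Type*} [Fintype ι] (m : ι → ℕ)
    (hm : ∑ i, m i ≠ 0) {x : S} (hx : 0 ≤ x) :
    (Fintype.card ι : S) * ∏ i, (ascPochhammer S (m i)).eval x ≤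
      (ascPochhammer S (∑ i, m i)).eval (Fintype.card ι * x) := by
  classical
  obtain ⟨i₀, -, hi₀⟩ := exists_ne_zero_of_sum_ne_zero hm
  obtain ⟨a, ha⟩ := Nat.exists_eq_add_one_of_ne_zero hi₀
  rw [← mul_prod_erase univ _ (mem_univ i₀), ← add_sum_erase univ _ (mem_univ i₀), ha,
    add_right_comm, ascPochhammer_eval_succ_left, ascPochhammer_eval_succ_left]
  set s := univ.erase i₀
  have hcard : (Fintype.card ι : S) = s.card + 1 := by
    rw [← card_univ, ← card_erase_add_one (mem_univ i₀), Nat.cast_add_one]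
  have hx₁ : 0 ≤ x + 1 := add_nonneg hx zero_le_one
  have hrest : (ascPochhammer S a).eval (x + 1) * ∏ i ∈ s, (ascPochhammer S (m i)).eval x ≤
      (ascPochhammer S (a + ∑ i ∈ s, m i)).eval (x + 1 + s.card * x) := by
    calc _ ≤ (ascPochhammer S a).eval (x + 1) *
            (ascPochhammer S (∑ i ∈ s, m i)).eval (∑ i ∈ s, x) :=
          mul_le_mul_of_nonneg_left (prod_ascPochhammer_eval_le_eval_sum s m fun _ _ => hx)
            (ascPochhammer_eval_nonneg _ hx₁)
      _ ≤ _ := by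
          rw [sum_const, nsmul_eq_mul]
          exact ascPochhammer_eval_mul_le_eval_add _ _ hx₁ (by positivity)
  rw [hcard]
  calc _ = ((s.card + 1) * x) * ((ascPochhammer S a).eval (x + 1) *
          ∏ i ∈ s, (ascPochhammer S (m i)).eval x) := by ring
    _ ≤ ((s.card + 1) * x) * (ascPochhammer S (a + ∑ i ∈ s, m i)).eval (x + 1 + s.card * x) :=
          mul_le_mul_of_nonneg_left hrest
            (mul_nonneg (add_nonneg (Nat.cast_nonneg _) zero_le_one) hx)
    _ = _ := by ring_nf

end Pochhammer

theorem Real.Gamma_nat_add_div_Gamma_eq (n : ℕ) {x : ℝ} (hx : ∀ k : ℕ, x ≠ -k) :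
    Real.Gamma (n + x) / Real.Gamma x = (ascPochhammer ℝ n).eval x := by
  induction n with
  | zero => simp [Real.Gamma_ne_zero hx]
  | succ n ih =>
    have hnx : (n : ℝ) + x ≠ 0 := fun h => hx n (by linarith)
    rw [Nat.cast_succ, add_right_comm, Real.Gamma_add_one hnx, mul_div_assoc, ih,
      ascPochhammer_succ_eval]
    ring

theorem bdeu_local_bound_neg_log_general (r : ℕ) (m : Fin r → ℕ)
    (hpos : 1 ≤ ∑ k, m k) (α' : ℝ) (hα' : 0 < α') :
    Real.log (Real.Gamma α' / Real.Gamma ((∑ k, m k : ℕ) + α')) +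
        ∑ k, Real.log (Real.Gamma ((m k : ℝ) + α' / r) / Real.Gamma (α' / r)) ≤
      -Real.log r := by
  obtain rfl | hr₀ := r.eq_zero_or_pos
  · simp at hpos
  have hr : (0 : ℝ) < r := by exact_mod_cast hr₀
  set α := α' / r
  have hα : 0 < α := by positivity
  have hGamma {x : ℝ} (hx : 0 < x) (n : ℕ) :
      Real.Gamma (n + x) / Real.Gamma x = (ascPochhammer ℝ n).eval x :=
    Real.Gamma_nat_add_div_Gamma_eq n fun k => by linarith [k.cast_nonneg (α := ℝ)]
  have key := card_mul_prod_ascPochhammer_eval_le m (by omega) hα.le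
  rw [Fintype.card_fin, mul_div_cancel₀ α' hr.ne'] at key
  have hprod : 0 < ∏ k, (ascPochhammer ℝ (m k)).eval α :=
    prod_pos fun k _ => ascPochhammer_pos _ _ hα
  have hlog := Real.log_le_log (mul_pos hr hprod) key
  rw [Real.log_mul hr.ne' hprod.ne'] at hlog
  rw [← inv_div, Real.log_inv, hGamma hα']
  simp_rw [hGamma hα]
  rw [← Real.log_prod fun k _ => (ascPochhammer_pos _ _ hα).ne']
  linarith

theorem bdeu_local_bound_neg_log (r : ℕ) (hr : 2 ≤ r) (m : Fin r → ℕ)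
    (hpos : 1 ≤ ∑ k, m k) (α' : ℝ) (hα' : 0 < α') :
    Real.log (Real.Gamma α' / Real.Gamma ((∑ k, m k : ℕ) + α')) +
        ∑ k, Real.log (Real.Gamma ((m k : ℝ) + α' / r) / Real.Gamma (α' / r)) ≤
      -Real.log r :=
  bdeu_local_bound_neg_log_general r m hpos α' hα'
end

section
/- Monotonicity of positive-count supports: if Π' ⊆ Π'' are parent sets and r⁺(S) denotes the number of joint instantiations of S with positive count in a fixed dataset, then r⁺(Π'') ≥ r⁺(Π'). Hence if σ(Π) + ε < r⁺(Π')·log r_i for r_i ≥ 2, then also the BDeu-score lower bound r⁺(Π'')·log r_i ≥ r⁺(Π')·log r_i > σ(Π) + ε holds for every superset Π'' ⊇ Π', so all supersets of Π' are safely pruned. -/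
/-- The number of joint instantiations of the variable set `S` that occur with positive
count in the dataset `d` of `M` instances over variables `V`. -/
noncomputable def rPlus {V : Type*} [DecidableEq V] (M : ℕ) (d : Fin M → V → ℕ)
    (S : Finset V) : ℕ :=
  (Finset.univ.image (fun m : Fin M => fun v : S => d m v)).card

theorem rPlus_mono {V : Type*} [DecidableEq V] (M : ℕ) (d : Fin M → V → ℕ) :
    Monotone (rPlus M d) := by
  intro S T hST
  have restrict_image : (Finset.univ.image fun m : Fin M => fun v : S => d m v) =
      (Finset.univ.image fun m : Fin M => fun v : T => d m v).image
        fun f : T → ℕ => fun v : S => f ⟨v, hST v.2⟩ := by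
    rw [Finset.image_image]
    rfl
  unfold rPlus
  rw [restrict_image]
  exact Finset.card_image_le

theorem rplus_mono_superset_pruning {V : Type*} [DecidableEq V]
    (M : ℕ) (d : Fin M → V → ℕ)  -- a dataset of M instances over variables V
    (P' P'' : Finset V) (hsub : P' ⊆ P'')
    (ri : ℕ) (hri : 2 ≤ ri) :
    rPlus M d P' ≤ rPlus M d P'' ∧
      ∀ σP ε : ℝ, 0 ≤ ε → σP + ε < (rPlus M d P' : ℝ) * Real.log ri →
        σP + ε < (rPlus M d P'' : ℝ) * Real.log ri := by
  have hmono : rPlus M d P' ≤ rPlus M d P'' := rPlus_mono M d hsub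
  have hlog : 0 ≤ Real.log ri := Real.log_nonneg (by exact_mod_cast one_le_two.trans hri)
  refine ⟨hmono, fun σP ε _ hprune => hprune.trans_le ?_⟩
  exact mul_le_mul_of_nonneg_right (by exact_mod_cast hmono) hlog
end
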